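/- Let P and Q be finite posets with natural labelings ω and τ (i.e., every cover relation is a weak edge). If supp_F(P,ω) ⊆ supp_F(Q,τ), then for every k ≥ 0, the maximum cardinality of a union of k antichains in P is less than or equal to the maximum cardinality of a union of k antichains in Q (equivalently, the antichain Greene shape of P is dominated by that of Q). -/

import Mathlib

open scoped BigOperators

section CommonDefs

variable {α : Type*}

/-- A `(P,ω)`-partition: an order-preserving map from the poset to the positive
integers (encoded in `ℕ`, all values `≥ 1`), strictly increasing along strict edges. -/
def IsPPart [PartialOrder α] (ω : α → ℕ) (f : α → ℕ) : Prop :=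
  (∀ p, 1 ≤ f p) ∧ (∀ a b : α, a < b → f a ≤ f b) ∧
    ∀ a b : α, a < b → ω b < ω a → f a < f b

/-- The `(P,ω)`-partition enumerator `K_{(P,ω)}` as a formal power series in the
variables `x_1, x_2, …` (the variable indexed by `i : ℕ` stands for `x_{i+1}`). -/
noncomputable def Kgen [PartialOrder α] (ω : α → ℕ) : MvPowerSeries ℕ ℚ :=
  fun d => (Set.ncard {f : α → ℕ |
    IsPPart ω f ∧ ∀ i : ℕ, Set.ncard {p : α | f p = i + 1} = d i} : ℚ)

/-- `K_{(P,ω)}` for a labeling by `Fin n`. -/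
noncomputable def Kω [PartialOrder α] {n : ℕ} (ω : α ≃ Fin n) : MvPowerSeries ℕ ℚ :=
  Kgen fun p => ((ω p : ℕ))

open Classical in
/-- The monomial quasisymmetric function `M_α`. -/
noncomputable def Mgen {n : ℕ} (c : Composition n) : MvPowerSeries ℕ ℚ :=
  fun d => if (∃ g : Fin c.length → ℕ, StrictMono g ∧
      d = ∑ j : Fin c.length, Finsupp.single (g j) (c.blocksFun j)) then 1 else 0

/-- The partial-sum set `S(α) ⊆ {1,…,n−1}` of a composition of `n`. -/
def compS {n : ℕ} (c : Composition n) : Finset ℕ :=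
  (Finset.range (c.length - 1)).image fun i => c.sizeUpTo (i + 1)

open Classical in
/-- `F_{S,n} = Σ_{S ⊆ T ⊆ [n-1]} M_{T,n}`. -/
noncomputable def FgenSet (n : ℕ) (S : Finset ℕ) : MvPowerSeries ℕ ℚ :=
  ∑ c : Composition n, if S ⊆ compS c then Mgen c else 0

/-- The fundamental quasisymmetric function `F_α`. -/
noncomputable def Fgen {n : ℕ} (c : Composition n) : MvPowerSeries ℕ ℚ :=
  FgenSet n (compS c)

/-- `e : Fin n ≃ α` is a listing of the elements of the poset compatible with the order. -/
def IsLinext [PartialOrder α] {n : ℕ} (e : Fin n ≃ α) : Prop :=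
  ∀ i j : Fin n, e i < e j → i < j

/-- The set `L(P,ω)` of linear extensions, regarded as words (permutations of `Fin n`). -/
def Linext [PartialOrder α] {n : ℕ} (ω : α ≃ Fin n) : Set (Fin n → Fin n) :=
  {w | ∃ e : Fin n ≃ α, IsLinext e ∧ w = fun i => ω (e i)}

open Classical in
/-- Descent set of a word, with 1-based positions, a subset of `{1,…,n−1}`:
`i ∈ Des w` iff the letter in position `i` is greater than the letter in position `i+1`. -/
noncomputable def Des {n : ℕ} (w : Fin n → Fin n) : Finset ℕ :=
  (Finset.Ioo 0 n).filter fun i =>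
    ∃ hi : i < n, w ⟨i, hi⟩ < w ⟨i - 1, Nat.lt_of_le_of_lt (Nat.sub_le i 1) hi⟩

/-- The F-support: the set of descent compositions of linear extensions. -/
def suppF [PartialOrder α] {n : ℕ} (ω : α ≃ Fin n) : Set (Composition n) :=
  {c | ∃ w ∈ Linext ω, compS c = Des w}

/-- The M-support: compositions `α = (α_1,…,α_k)` realized as fiber sizes of a
`(P,ω)`-partition with all values at most `k`. -/
def suppM [PartialOrder α] {n : ℕ} (ω : α ≃ Fin n) : Set (Composition n) :=
  {c | ∃ f : α → ℕ, IsPPart (fun p => ((ω p : ℕ))) f ∧ (∀ p, f p ≤ c.length) ∧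
      ∀ i : Fin c.length, Set.ncard {p : α | f p = (i : ℕ) + 1} = c.blocksFun i}

/-- `A` is a non-negative linear combination of fundamental quasisymmetric functions. -/
def NonnegFComb (A : MvPowerSeries ℕ ℚ) : Prop :=
  ∃ (s : Finset ((n : ℕ) × Composition n)) (coef : ((n : ℕ) × Composition n) → ℚ),
    (∀ x, 0 ≤ coef x) ∧ A = ∑ x ∈ s, coef x • Fgen x.2

/-- `A` is a non-negative linear combination of monomial quasisymmetric functions. -/
def NonnegMComb (A : MvPowerSeries ℕ ℚ) : Prop :=
  ∃ (s : Finset ((n : ℕ) × Composition n)) (coef : ((n : ℕ) × Composition n) → ℚ),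
    (∀ x, 0 ≤ coef x) ∧ A = ∑ x ∈ s, coef x • Mgen x.2

/-- `A ≤_F B`. -/
def LeF (A B : MvPowerSeries ℕ ℚ) : Prop := NonnegFComb (B - A)

/-- `A ≤_M B`. -/
def LeM (A B : MvPowerSeries ℕ ℚ) : Prop := NonnegMComb (B - A)

/-- The order-reversing permutation of `Fin n`. -/
def finRevEquiv {n : ℕ} : Fin n ≃ Fin n :=
  ⟨Fin.rev, Fin.rev, Fin.rev_rev, Fin.rev_rev⟩

def barLabel {n : ℕ} (ω : α ≃ Fin n) : α ≃ Fin n := ω.trans finRevEquiv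

/-- The star involution: the dual poset with labels `ω*(a) = n+1−ω(a)`. -/
def starLabel {n : ℕ} (ω : α ≃ Fin n) : αᵒᵈ ≃ Fin n :=
  OrderDual.ofDual.trans (barLabel ω)

/-- The reverse of a composition. -/
def compRev {n : ℕ} (c : Composition n) : Composition n :=
  ⟨c.blocks.reverse, fun h => c.blocks_pos (List.mem_reverse.mp h), by
    rw [List.sum_reverse]; exact c.blocks_sum⟩

/-- A saturated chain from `b` down to a minimal element, listed from top to bottom. -/
def IsDownChain [PartialOrder α] (b : α) (l : List α) : Prop :=
  l ≠ [] ∧ l.head? = some b ∧ List.Chain' (fun x y => y ⋖ x) l ∧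
    ∀ x ∈ l.getLast?, IsMin x

/-- Number of strict edges in a top-to-bottom saturated chain. -/
def strictCountDown (ω : α → ℕ) (l : List α) : ℕ :=
  (l.zip l.tail).countP fun p => decide (ω p.1 < ω p.2)

/-- The jump of an element: the maximum number of strict edges on a saturated chain
from `b` down to a minimal element. -/
noncomputable def jumpOf [PartialOrder α] (ω : α → ℕ) (b : α) : ℕ :=
  sSup {k | ∃ l : List α, IsDownChain b l ∧ strictCountDown ω l = k}

/-- The maximum jump of an element. -/
noncomputable def maxJump [PartialOrder α] [Fintype α] (ω : α → ℕ) : ℕ :=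
  sSup {k | ∃ b : α, jumpOf ω b = k}

/-- The jump sequence `(j_0, …, j_k)` as a list. -/
noncomputable def jumpBlocks [PartialOrder α] [Fintype α] (ω : α → ℕ) : List ℕ :=
  (List.range (maxJump ω + 1)).map fun i => Set.ncard {b : α | jumpOf ω b = i}

/-- A maximal chain (saturated, from a minimal to a maximal element), bottom to top. -/
def IsMaxChainList [PartialOrder α] (l : List α) : Prop :=
  l ≠ [] ∧ List.Chain' (· ⋖ ·) l ∧ (∀ x ∈ l.head?, IsMin x) ∧ ∀ x ∈ l.getLast?, IsMax x

/-- Number of strict edges in a bottom-to-top saturated chain. -/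
def strictCountUp (ω : α → ℕ) (l : List α) : ℕ :=
  (l.zip l.tail).countP fun p => decide (ω p.2 < ω p.1)

/-- Number of weak edges in a bottom-to-top saturated chain. -/
def weakCountUp (ω : α → ℕ) (l : List α) : ℕ :=
  (l.zip l.tail).countP fun p => decide (ω p.1 < ω p.2)

/-- A weak convex subposet: convex, and all cover relations inside it are weak. -/
def IsWeakConvex [PartialOrder α] (ω : α → ℕ) (S : Set α) : Prop :=
  (∀ ⦃x y z : α⦄, x < y → y < z → x ∈ S → z ∈ S → y ∈ S) ∧
    ∀ a ∈ S, ∀ b ∈ S, a ⋖ b → ω a < ω b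

/-- The order relation of the assembled poset `𝒫[i → P_i]`. -/
def assembledLe {I : Type*} (PO : PartialOrder I) {X : I → Type*}
    (Pc : ∀ i, PartialOrder (X i)) (x y : Σ i, X i) : Prop :=
  PO.lt x.1 y.1 ∨ ∃ h : x.1 = y.1, (Pc y.1).le (h ▸ x.2) y.2

/-- The assembled poset `𝒫[i → P_i]` as a partial order on the disjoint union. -/
def assembledOrder {I : Type*} (PO : PartialOrder I) {X : I → Type*}
    (Pc : ∀ i, PartialOrder (X i)) : PartialOrder (Σ i, X i) := by
  letI : PartialOrder I := PO
  letI instX : ∀ i, PartialOrder (X i) := Pc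
  exact
  { le := assembledLe PO Pc
    lt := fun x y => assembledLe PO Pc x y ∧ ¬ assembledLe PO Pc y x
    lt_iff_le_not_ge := fun _ _ => Iff.rfl
    le_refl := fun x => Or.inr ⟨rfl, le_refl x.2⟩
    le_trans := by
      rintro ⟨i, p⟩ ⟨j, q⟩ ⟨k, r⟩ h1 h2
      rcases h1 with h1 | ⟨e1, h1⟩ <;> rcases h2 with h2 | ⟨e2, h2⟩
      · exact Or.inl (lt_trans h1 h2)
      · dsimp only at e2 h2 ⊢; subst e2; exact Or.inl h1
      · dsimp only at e1 h1 ⊢; subst e1; exact Or.inl h2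
      · dsimp only at e1 h1 e2 h2 ⊢; subst e1; subst e2
        exact Or.inr ⟨rfl, le_trans h1 h2⟩
    le_antisymm := by
      rintro ⟨i, p⟩ ⟨j, q⟩ h1 h2
      rcases h1 with h1 | ⟨e1, h1⟩ <;> rcases h2 with h2 | ⟨e2, h2⟩
      · exact absurd (lt_trans h1 h2) (lt_irrefl _)
      · dsimp only at e2 h2 ⊢; subst e2; exact absurd h1 (lt_irrefl _)
      · dsimp only at e1 h1 ⊢; subst e1; exact absurd h2 (lt_irrefl _)
      · dsimp only at e1 h1 e2 h2 ⊢; subst e1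
        obtain rfl : p = q := le_antisymm h1 h2
        rfl }

end CommonDefs

/-!
Let `S` be a union of `k` antichains of `P`, and measure the height of an element by the largest
size of a chain of elements of `S` strictly below it. Elements of `S` of equal height are
incomparable, and there are at most `k` heights on `S`. Sorting `P` by height, listing the
elements of `S` of each height consecutively and in decreasing label order, gives a linear
extension in which each height class of `S` lies inside one descending run. Some linear extension
of `Q` has the same descent set, and since `τ` is natural the elements of `Q` placed on a
descending run form an antichain. The at most `k` runs met by `S` thus give `k` antichains of
`Q` covering at least `|S|` elements.
-/

theorem strictMono_of_forall_covBy_lt {α β : Type*} [PartialOrder α] [Finite α] [Preorder β]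
    {f : α → β} (hf : ∀ a b : α, a ⋖ b → f a < f b) : StrictMono f := by
  classical
  have := Fintype.ofFinite α
  let := Fintype.toLocallyFiniteOrder (α := α)
  exact (strictMono_iff_forall_covBy f).2 hf

section Descents

variable {n : ℕ}

lemma mem_Des {w : Fin n → Fin n} {j : ℕ} :
    j ∈ Des w ↔ 0 < j ∧ ∃ hj : j < n, w ⟨j, hj⟩ < w ⟨j - 1, by omega⟩ := by
  simp only [Des, Finset.mem_filter, Finset.mem_Ioo]
  exact ⟨fun ⟨⟨h0, _⟩, h⟩ => ⟨h0, h⟩, fun ⟨h0, hj, h⟩ => ⟨⟨h0, hj⟩, hj, h⟩⟩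

/-- Indexes the maximal descending runs of a word with descent set `D`: see `runIdx_eq_iff`. -/
def runIdx (D : Finset ℕ) (i : ℕ) : ℕ := ∑ j ∈ Finset.Ioc 0 i, if j ∈ D then 0 else 1

lemma runIdx_eq_iff (D : Finset ℕ) {i i' : ℕ} (h : i ≤ i') :
    runIdx D i = runIdx D i' ↔ ∀ j, i < j → j ≤ i' → j ∈ D := by
  rw [runIdx, runIdx, ← Finset.sum_Ioc_consecutive _ (Nat.zero_le i) h, left_eq_add,
    Finset.sum_eq_zero_iff]
  simp only [Finset.mem_Ioc, ite_eq_left_iff, one_ne_zero, imp_false, not_not, and_imp]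

lemma le_of_forall_mem_Des (w : Fin n → Fin n) {i i' : ℕ} (hii : i ≤ i') (hi' : i' < n)
    (h : ∀ j, i < j → j ≤ i' → j ∈ Des w) : w ⟨i', hi'⟩ ≤ w ⟨i, by omega⟩ := by
  induction i', hii using Nat.le_induction with
  | base => exact le_rfl
  | succ m him ih =>
    obtain ⟨-, _, hlt⟩ := mem_Des.1 (h (m + 1) (by omega) le_rfl)
    exact (le_of_lt hlt).trans (ih (by omega) fun j hj1 hj2 => h j hj1 (by omega))

lemma isAntichain_image_runIdx_eq {β : Type*} [PartialOrder β] {τ : β ≃ Fin n}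
    (hτ : StrictMono τ) {e : Fin n ≃ β} (he : IsLinext e) (c : ℕ) :
    IsAntichain (· ≤ ·) (e '' {i | runIdx (Des fun i => τ (e i)) i = c}) := by
  rintro _ ⟨i, hi, rfl⟩ _ ⟨i', hi', rfl⟩ hne hle
  have hlt : e i < e i' := lt_of_le_of_ne hle hne
  have hii : i < i' := he i i' hlt
  have hrun := (runIdx_eq_iff _ hii.le).1 (hi.trans hi'.symm)
  exact (hτ hlt).not_ge (le_of_forall_mem_Des _ hii.le i'.is_lt hrun)

end Descents

section Compositions

variable {n : ℕ}

lemma mem_compS_iff (c : Composition n) {x : ℕ} :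
    x ∈ compS c ↔ 0 < x ∧ x < n ∧ ∃ y ∈ c.boundaries, (y : ℕ) = x := by
  have hbd : ∀ j : Fin (c.length + 1), (c.boundary j : ℕ) = c.sizeUpTo j := fun _ => rfl
  simp only [compS, Finset.mem_image, Finset.mem_range, Composition.boundaries, Finset.mem_map,
    Finset.mem_univ, true_and, RelEmbedding.coe_toEmbedding]
  constructor
  · rintro ⟨i, hi, rfl⟩
    refine ⟨Nat.zero_lt_of_lt (c.sizeUpTo_strict_mono (by omega)),
      (c.sizeUpTo_strict_mono (by omega)).trans_le (c.sizeUpTo_le _),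
      c.boundary ⟨i + 1, by omega⟩, ⟨_, rfl⟩, rfl⟩
  · rintro ⟨h0, hn, _, ⟨j, rfl⟩, rfl⟩
    rw [hbd] at h0 hn ⊢
    have hj0 : (j : ℕ) ≠ 0 := fun h => by rw [h, c.sizeUpTo_zero] at h0; exact h0.false
    have hjl : (j : ℕ) < c.length := by
      by_contra hjl
      exact hn.ne (c.sizeUpTo_ofLength_le _ (by omega))
    exact ⟨j - 1, by omega, by rw [Nat.sub_add_cancel (by omega)]⟩

lemma exists_compS_eq (D : Finset ℕ) (hD : ∀ j ∈ D, 0 < j ∧ j < n) :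
    ∃ c : Composition n, compS c = D := by
  let cs : CompositionAsSet n :=
    ⟨insert 0 (insert (Fin.last n) (Finset.univ.filter fun x : Fin (n + 1) => (x : ℕ) ∈ D)),
      by simp, by simp⟩
  refine ⟨cs.toComposition, Finset.ext fun x => ?_⟩
  rw [mem_compS_iff, cs.toComposition_boundaries]
  simp only [cs, Finset.mem_insert, Finset.mem_filter, Finset.mem_univ, true_and]
  constructor
  · rintro ⟨h0, hn, y, hy | hy | hy, rfl⟩
    · simp [hy] at h0
    · simp [hy] at hn
    · exact hy
  · intro hx
    obtain ⟨h0, hn⟩ := hD x hx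
    exact ⟨h0, hn, ⟨x, by omega⟩, Or.inr (Or.inr hx), rfl⟩

lemma exists_Des_eq_of_suppF_subset {α β : Type*} [PartialOrder α] [PartialOrder β]
    {ω : α ≃ Fin n} {τ : β ≃ Fin n} (h : suppF ω ⊆ suppF τ) {w : Fin n → Fin n}
    (hw : w ∈ Linext ω) : ∃ w' ∈ Linext τ, Des w' = Des w := by
  obtain ⟨c, hc⟩ := exists_compS_eq (n := n) (Des w) fun j hj => by
    obtain ⟨h0, hj, -⟩ := mem_Des.1 hj
    exact ⟨h0, hj⟩
  obtain ⟨w', hw', hc'⟩ := h ⟨w, hw, hc⟩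
  exact ⟨w', hw', hc'.symm.trans hc⟩

end Compositions

theorem IsChain.ncard_le_of_subset_iUnion {α : Type*} {r : α → α → Prop} {k : ℕ}
    {A : Fin k → Set α} (hA : ∀ j, IsAntichain r (A j)) {C : Set α} (hC : IsChain r C)
    (hCA : C ⊆ ⋃ j, A j) : C.ncard ≤ k := by
  obtain rfl | ⟨x₀, hx₀⟩ := C.eq_empty_or_nonempty
  · simp
  have : Nonempty (Fin k) := ⟨(Set.mem_iUnion.1 (hCA hx₀)).choose⟩
  choose! f hf using fun x (hx : x ∈ C) => Set.mem_iUnion.1 (hCA hx)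
  calc C.ncard ≤ (Set.univ : Set (Fin k)).ncard :=
        Set.ncard_le_ncard_of_injOn f (fun _ _ => Set.mem_univ _) fun x hx y hy hxy =>
          inter_subsingleton_of_isChain_of_isAntichain hC (hA (f x)) ⟨hx, hf x hx⟩
            ⟨hy, hxy ▸ hf y hy⟩
    _ = k := by simp

section Height

variable {α : Type*} [PartialOrder α] (S : Set α)

noncomputable def heightBelow (p : α) : ℕ :=
  sSup {m | ∃ C ⊆ S ∩ Set.Iio p, IsChain (· ≤ ·) C ∧ C.ncard = m}

variable [Finite α]

lemma bddAbove_chain_ncard (p : α) :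
    BddAbove {m | ∃ C ⊆ S ∩ Set.Iio p, IsChain (· ≤ ·) C ∧ C.ncard = m} :=
  ⟨Nat.card α, by rintro _ ⟨C, -, -, rfl⟩; exact Set.ncard_le_card C⟩

lemma exists_isChain_ncard_eq_heightBelow (p : α) :
    ∃ C ⊆ S ∩ Set.Iio p, IsChain (· ≤ ·) C ∧ C.ncard = heightBelow S p :=
  Nat.sSup_mem (s := {m | ∃ C ⊆ S ∩ Set.Iio p, IsChain (· ≤ ·) C ∧ C.ncard = m})
    ⟨0, ∅, Set.empty_subset _, IsChain.empty, Set.ncard_empty _⟩ (bddAbove_chain_ncard S p)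

lemma ncard_le_heightBelow {p : α} {C : Set α} (hCS : C ⊆ S ∩ Set.Iio p)
    (hC : IsChain (· ≤ ·) C) : C.ncard ≤ heightBelow S p :=
  le_csSup (bddAbove_chain_ncard S p) ⟨C, hCS, hC, rfl⟩

lemma heightBelow_mono : Monotone (heightBelow S) := fun p q hpq => by
  obtain ⟨C, hCS, hC, hCp⟩ := exists_isChain_ncard_eq_heightBelow S p
  exact hCp ▸ ncard_le_heightBelow S
    (hCS.trans (Set.inter_subset_inter_right _ (Set.Iio_subset_Iio hpq))) hC

lemma heightBelow_lt_of_lt {p q : α} (hp : p ∈ S) (hpq : p < q) :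
    heightBelow S p < heightBelow S q := by
  obtain ⟨C, hCS, hC, hCp⟩ := exists_isChain_ncard_eq_heightBelow S p
  have hpC : p ∉ C := fun h => lt_irrefl p (hCS h).2
  have hins : insert p C ⊆ S ∩ Set.Iio q :=
    Set.insert_subset ⟨hp, hpq⟩ fun x hx => ⟨(hCS hx).1, (hCS hx).2.trans hpq⟩
  have hch : IsChain (· ≤ ·) (insert p C) :=
    hC.insert fun x hx _ => Or.inr (hCS hx).2.le
  calc heightBelow S p < (insert p C).ncard := by rw [Set.ncard_insert_of_notMem hpC, hCp]; omega
    _ ≤ heightBelow S q := ncard_le_heightBelow S hins hch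

lemma heightBelow_lt_of_mem_iUnion {k : ℕ} {A : Fin k → Set α}
    (hA : ∀ j, IsAntichain (· ≤ ·) (A j)) {s : α} (hs : s ∈ ⋃ j, A j) :
    heightBelow (⋃ j, A j) s < k := by
  obtain ⟨C, hCS, hC, hCs⟩ := exists_isChain_ncard_eq_heightBelow (⋃ j, A j) s
  have hsC : s ∉ C := fun h => lt_irrefl s (hCS h).2
  have hch : IsChain (· ≤ ·) (insert s C) :=
    hC.insert fun x hx _ => Or.inr (hCS hx).2.le
  have := hch.ncard_le_of_subset_iUnion hA (Set.insert_subset hs fun x hx => (hCS hx).1)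
  rw [Set.ncard_insert_of_notMem hsC] at this
  omega

end Height

theorem exists_equiv_fin_strictMono_comp {α γ : Type*} [Finite α] [LinearOrder γ] {n : ℕ}
    (hn : Nat.card α = n) {f : α → γ} (hf : Function.Injective f) :
    ∃ e : Fin n ≃ α, StrictMono (f ∘ e) := by
  classical
  have := Fintype.ofFinite α
  have hcard : Fintype.card (Set.range f) = n := by
    rw [Set.card_range_of_injective hf, ← Nat.card_eq_fintype_card, hn]
  let iso := Fintype.orderIsoFinOfCardEq (Set.range f) hcard
  refine ⟨iso.toEquiv.trans (Equiv.ofInjective f hf).symm, fun i j hij => ?_⟩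
  simpa [Equiv.apply_ofInjective_symm] using iso.strictMono hij

section LevelKey

variable {α : Type*} [PartialOrder α]

open Classical in
/-- Sorting by this key lists, for `h = 0, 1, …`, first the elements outside `S` of height `h`
in increasing label order and then the elements of `S` of height `h` in decreasing label order. -/
noncomputable def levelKey (ω : α → ℕ) (S : Set α) (p : α) : ℕ ×ₗ ℤ :=
  toLex (2 * heightBelow S p + if p ∈ S then 1 else 0, if p ∈ S then -(ω p : ℤ) else ω p)

lemma levelKey_injective {ω : α → ℕ} (hω : Function.Injective ω) (S : Set α) :
    Function.Injective (levelKey ω S) := fun p q hpq => by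
  simp only [levelKey, toLex_inj, Prod.mk.injEq] at hpq
  apply hω
  split_ifs at hpq <;> omega

variable [Finite α] in
lemma levelKey_strictMono {ω : α → ℕ} (hω : StrictMono ω) (S : Set α) :
    StrictMono (levelKey ω S) := fun p q hpq => by
  have hle := heightBelow_mono S hpq.le
  have hlt := fun hp => heightBelow_lt_of_lt S hp hpq
  have hω' := hω hpq
  simp only [levelKey, Prod.Lex.toLex_lt_toLex]
  split_ifs with hp hq hq <;> (try have := hlt hp) <;> omega

end LevelKey

section LinearExtension

variable {α : Type*} [PartialOrder α] {n : ℕ}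

lemma runIdx_eq_of_heightBelow_eq {ω : α ≃ Fin n} {S : Set α} {e : Fin n ≃ α}
    (he : StrictMono (levelKey (fun p => (ω p : ℕ)) S ∘ e)) {s t : α} (hs : s ∈ S) (ht : t ∈ S)
    (hst : heightBelow S s = heightBelow S t) (hle : e.symm s ≤ e.symm t) :
    runIdx (Des fun i => ω (e i)) (e.symm s) = runIdx (Des fun i => ω (e i)) (e.symm t) := by
  have hblock : ∀ u, e.symm s ≤ u → u ≤ e.symm t →
      e u ∈ S ∧ heightBelow S (e u) = heightBelow S s := by
    intro u hsu hut
    -- the first coordinate of the key is `2 * heightBelow S p + 1` on `S` and even off `S`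
    have h1 := Prod.Lex.monotone_fst _ _ (by simpa using he.monotone hsu :
      levelKey (fun p => (ω p : ℕ)) S s ≤ _)
    have h2 := Prod.Lex.monotone_fst _ _ (by simpa using he.monotone hut :
      _ ≤ levelKey (fun p => (ω p : ℕ)) S t)
    simp only [levelKey, ofLex_toLex, if_pos hs, if_pos ht] at h1 h2
    by_cases hu : e u ∈ S
    · rw [if_pos hu] at h1 h2
      exact ⟨hu, by omega⟩
    · rw [if_neg hu] at h1 h2
      omega
  rw [runIdx_eq_iff _ hle]
  intro j hsj hjt
  have hjn : j < n := hjt.trans_lt (e.symm t).is_lt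
  obtain ⟨hu, hhu⟩ := hblock ⟨j, hjn⟩ (Fin.le_iff_val_le_val.2 (by simp; omega))
    (Fin.le_iff_val_le_val.2 hjt)
  obtain ⟨hu', hhu'⟩ := hblock ⟨j - 1, by omega⟩ (Fin.le_iff_val_le_val.2 (by simp; omega))
    (Fin.le_iff_val_le_val.2 (by simp; omega))
  have hkey := he (show (⟨j - 1, by omega⟩ : Fin n) < ⟨j, hjn⟩ from Fin.mk_lt_mk.2 (by omega))
  simp only [Function.comp_apply, levelKey, if_pos hu, if_pos hu', Prod.Lex.toLex_lt_toLex]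
    at hkey
  exact mem_Des.2 ⟨by omega, hjn, Fin.lt_def.2 (by omega)⟩

variable [Finite α]

lemma exists_isLinext_runIdx_eq (ω : α ≃ Fin n) (hω : StrictMono ω) (S : Set α) :
    ∃ e : Fin n ≃ α, IsLinext e ∧ ∀ s ∈ S, ∀ t ∈ S, heightBelow S s = heightBelow S t →
      runIdx (Des fun i => ω (e i)) (e.symm s) = runIdx (Des fun i => ω (e i)) (e.symm t) := by
  obtain ⟨e, he⟩ := exists_equiv_fin_strictMono_comp (Nat.card_eq_of_equiv_fin ω)
    (levelKey_injective (Fin.val_injective.comp ω.injective) S)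
  refine ⟨e, fun i j hij => he.lt_iff_lt.1 (levelKey_strictMono (Fin.val_strictMono.comp hω) S hij),
    fun s hs t ht hst => ?_⟩
  rcases le_total (e.symm s) (e.symm t) with h | h
  · exact runIdx_eq_of_heightBelow_eq he hs ht hst h
  · exact (runIdx_eq_of_heightBelow_eq he ht hs hst.symm h).symm

theorem exists_antichains_ncard_le_of_suppF_subset {β : Type*} [PartialOrder β]
    {ω : α ≃ Fin n} {τ : β ≃ Fin n} (hω : StrictMono ω) (hτ : StrictMono τ)
    (h : suppF ω ⊆ suppF τ) {k : ℕ} {A : Fin k → Set α} (hA : ∀ j, IsAntichain (· ≤ ·) (A j)) :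
    ∃ B : Fin k → Set β, (∀ j, IsAntichain (· ≤ ·) (B j)) ∧
      (⋃ j, A j).ncard ≤ (⋃ j, B j).ncard := by
  set S := ⋃ j, A j
  obtain ⟨e, he, hrun⟩ := exists_isLinext_runIdx_eq ω hω S
  obtain ⟨_, ⟨e', he', rfl⟩, hD⟩ := exists_Des_eq_of_suppF_subset h ⟨e, he, rfl⟩
  set D := Des fun i => τ (e' i)
  rw [← hD] at hrun
  let R : Fin k → Set (Fin n) := fun j =>
    {i | ∃ s ∈ S, heightBelow S s = j ∧ runIdx D i = runIdx D (e.symm s)}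
  refine ⟨fun j => e' '' R j, fun j => ?_, ?_⟩
  · rintro _ ⟨i, ⟨s, hs, hsj, hi⟩, rfl⟩ _ ⟨i', ⟨s', hs', hs'j, hi'⟩, rfl⟩
    have hi'' := hi'.trans (hrun s' hs' s hs (hs'j.trans hsj.symm))
    exact isAntichain_image_runIdx_eq hτ he' _ ⟨i, hi, rfl⟩ ⟨i', hi'', rfl⟩
  · rw [← Set.image_iUnion]
    calc S.ncard = (e.symm '' S).ncard := (Set.ncard_image_of_injective _ e.symm.injective).symm
      _ ≤ (⋃ j, R j).ncard := Set.ncard_le_ncard fun _ ⟨s, hs, hi⟩ => Set.mem_iUnion.2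
          ⟨⟨heightBelow S s, heightBelow_lt_of_mem_iUnion hA hs⟩, s, hs, rfl, hi ▸ rfl⟩
      _ = (e' '' ⋃ j, R j).ncard := (Set.ncard_image_of_injective _ e'.injective).symm

end LinearExtension

theorem stmt_11_general {α β : Type*} [PartialOrder α] [PartialOrder β]
    {n : ℕ} (ω : α ≃ Fin n) (τ : β ≃ Fin n)
    (hP : ∀ a b : α, a ⋖ b → ω a < ω b) (hQ : ∀ a b : β, a ⋖ b → τ a < τ b)
    (h : suppF ω ⊆ suppF τ) (k : ℕ) :
    sSup {m | ∃ A : Fin k → Set α,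
        (∀ j, IsAntichain (· ≤ ·) (A j)) ∧ (⋃ j, A j).ncard = m} ≤
      sSup {m | ∃ A : Fin k → Set β,
        (∀ j, IsAntichain (· ≤ ·) (A j)) ∧ (⋃ j, A j).ncard = m} := by
  have : Finite α := Finite.of_equiv _ ω.symm
  have : Finite β := Finite.of_equiv _ τ.symm
  refine csSup_le' fun _ ⟨A, hA, hm⟩ => ?_
  obtain ⟨B, hB, hle⟩ := exists_antichains_ncard_le_of_suppF_subset
    (strictMono_of_forall_covBy_lt hP) (strictMono_of_forall_covBy_lt hQ) h hA
  exact le_csSup_of_le ⟨Nat.card β, by rintro _ ⟨B, -, rfl⟩; exact Set.ncard_le_card _⟩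
    ⟨B, hB, rfl⟩ (hm ▸ hle)

/-- for naturally labeled posets with `F`-support containment, unions of
`k` antichains in `P` are at most as large as in `Q`. -/
theorem stmt_11 {α β : Type*} [PartialOrder α] [PartialOrder β] [Fintype α] [Fintype β]
    {n : ℕ} (ω : α ≃ Fin n) (τ : β ≃ Fin n)
    (hP : ∀ a b : α, a ⋖ b → ω a < ω b) (hQ : ∀ a b : β, a ⋖ b → τ a < τ b)
    (h : suppF ω ⊆ suppF τ) (k : ℕ) :
    sSup {m | ∃ A : Fin k → Set α,
        (∀ j, IsAntichain (· ≤ ·) (A j)) ∧ (⋃ j, A j).ncard = m} ≤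
      sSup {m | ∃ A : Fin k → Set β,
        (∀ j, IsAntichain (· ≤ ·) (A j)) ∧ (⋃ j, A j).ncard = m} :=
  stmt_11_general ω τ hP hQ h k
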